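/- arXiv:1303.4212 — 2 statements merged into one kernel-verified Lean document; each statement's English description precedes it below -/
import Mathlib

section
/- Let f : X → 𝒢(Z,C) be a convex function and x₀ ∈ dom f. (i) If f(x₀) is minimal in f[X] (i.e. f(x) ⊇ f(x₀) implies f(x) = f(x₀)), then x₀ solves the scalarized Minty inequality (mvi_M): for all x with f(x) ≠ f(x₀) there exists z* ∈ C⁻∖{0} with φ_{f,z*}(x) ≠ −∞ and φ′_{f,z*}(x, x₀−x) < 0. (ii) Conversely, if there is a finite set M* ⊆ C⁻∖{0} such that x₀ solves the M*-restricted Minty inequality: for all x with f(x) ≠ f(x₀) there exists z* ∈ M* with φ_{f,z*}(x) ≠ −∞ and φ′_{f,z*}(x, x₀−x) < 0, and for every x ∈ X and every z* ∈ M* the function t ↦ φ_{f,z*}(x₀ + t(x−x₀)) on [0,1] is lower semicontinuous at 0, then f(x₀) is minimal in f[X]. -/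
open Set Pointwise

noncomputable section

variable {Z : Type*} [AddCommGroup Z] [Module ℝ Z] [TopologicalSpace Z]

/-- The inf-residual `A ⊖ B = {z : B + {z} ⊆ A}`. -/
def resid (A B : Set Z) : Set Z := {z : Z | B + {z} ⊆ A}

/-- The recession cone `0⁺A`, with the convention `0⁺∅ = ∅`. -/
def recCone (A : Set Z) : Set Z := {z : Z | A.Nonempty ∧ A + {z} ⊆ A}

/-- `A ⊕ B = cl (A + B)`. -/
def oplus (A B : Set Z) : Set Z := closure (A + B)

/-- Membership in `𝒢(Z,C)`: `A = cl co (A + C)`. -/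
def IsG (C A : Set Z) : Prop := A = closure (convexHull ℝ (A + C))

/-- The set `C⁻ \ {0}` of nonzero elements of the negative dual cone. -/
def negDualNZ (C : Set Z) : Set (Z →L[ℝ] ℝ) :=
  {p : Z →L[ℝ] ℝ | (∀ c ∈ C, p c ≤ 0) ∧ p ≠ 0}

/-- `inf {-z*(z) : z ∈ A}` as an extended real. -/
def scal (p : Z →L[ℝ] ℝ) (A : Set Z) : EReal :=
  sInf ((fun z => ((-(p z) : ℝ) : EReal)) '' A)

/-- Support function `σ(z*|A) = sup {z*(z) : z ∈ A}` as an extended real. -/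
def suppF (p : Z →L[ℝ] ℝ) (A : Set Z) : EReal :=
  sSup ((fun z => ((p z : ℝ) : EReal)) '' A)

/-- Inf-residuation on the extended reals: `r ⊖ s = inf {t ∈ ℝ : r ≤ s + t}`. -/
def eresid (r s : EReal) : EReal :=
  sInf ((fun t : ℝ => (t : EReal)) '' {t : ℝ | r ≤ s + (t : EReal)})

variable {X : Type*} [AddCommGroup X] [Module ℝ X]

/-- The scalarization `φ_{f,z*}(x) = inf {-z*(z) : z ∈ f(x)}`. -/
def phi (f : X → Set Z) (p : Z →L[ℝ] ℝ) (x : X) : EReal := scal p (f x)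

/-- Convexity for set-valued functions:
`f(t x₁ + (1-t) x₂) ⊇ cl (t f(x₁) + (1-t) f(x₂))`. -/
def ConvexSV (f : X → Set Z) : Prop :=
  ∀ x₁ x₂ : X, ∀ t : ℝ, t ∈ Ioo (0:ℝ) 1 →
    closure (t • f x₁ + (1 - t) • f x₂) ⊆ f (t • x₁ + (1 - t) • x₂)

/-- The set-valued directional derivative
`f′(x,u) = ⋂_{t₀>0} cl co ⋃_{0<t<t₀} (1/t)•(f(x+tu) ⊖ f(x))`. -/
def sder (f : X → Set Z) (x u : X) : Set Z :=
  ⋂ t₀ ∈ Ioi (0:ℝ), closure (convexHull ℝ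
    (⋃ t ∈ Ioo (0:ℝ) t₀, (1 / t) • resid (f (x + t • u)) (f x)))

/-- The scalar Dini derivative `φ′_{f,z*}(x,u) = inf_{t>0} (1/t)(φ(x+tu) ⊖ φ(x))`. -/
def phiDer (f : X → Set Z) (p : Z →L[ℝ] ℝ) (x u : X) : EReal :=
  ⨅ t ∈ Ioi (0:ℝ), (((1 / t : ℝ)) : EReal) * eresid (phi f p (x + t • u)) (phi f p x)

end

/-!
(i) If `f x ≠ f x₀`, minimality yields `z ∈ f x₀ \ f x` (or `f x = ∅`, where `φ(x) = +∞` and any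
`z*` works). A functional strictly separating `z` from the closed convex set `f x` lies in `C⁻`
since `f x + C ⊆ f x`, and convexity of `f` at the midpoint of `[x, x₀]` forces `φ` to drop.

(ii) If `f x₀ ⊊ f x`, then `f x₀ ⊆ f` along `[x₀, x]`, so there every `φ_{z*} ≤ φ_{z*}(x₀) < +∞`.
At a point of the segment where `f ≠ f x₀`, the Minty inequality gives some `z* ∈ M*` and a point
nearer to `x₀` with smaller `φ_{z*}`. This happens on a whole interval `(0, τ₁)`; by convexity the
property "`φ_{z*}` drops somewhere below `t`" is upward closed in `t`, so by finiteness of `M*` one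
`z*` has it on all of `(0, τ₁)`. Then `t ↦ φ_{z*}(x₀ + t (x - x₀))` is strictly increasing on
`(0, τ₁)` and bounded by its value at `0`, contradicting lower semicontinuity at `0`.
-/

section Scalarization

variable {Z X : Type*} [AddCommGroup Z] [Module ℝ Z] [TopologicalSpace Z]
  {f : X → Set Z} {p : Z →L[ℝ] ℝ}

lemma phi_le_of_mem {x : X} {z : Z} (hz : z ∈ f x) : phi f p x ≤ ((-(p z) : ℝ) : EReal) :=
  sInf_le ⟨z, hz, rfl⟩

lemma exists_mem_lt_of_phi_lt {x : X} {r : ℝ} (h : phi f p x < r) : ∃ z ∈ f x, -(p z) < r := by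
  obtain ⟨_, ⟨z, hz, rfl⟩, hzr⟩ := sInf_lt_iff.1 h
  exact ⟨z, hz, EReal.coe_lt_coe_iff.1 hzr⟩

lemma phi_le_phi_of_subset {x y : X} (h : f x ⊆ f y) : phi f p y ≤ phi f p x :=
  sInf_le_sInf (image_mono h)

lemma phi_ne_top_of_nonempty {x : X} (h : (f x).Nonempty) : phi f p x ≠ ⊤ :=
  ne_top_of_le_ne_top (EReal.coe_ne_top _) (phi_le_of_mem h.some_mem)

lemma phi_eq_top_of_eq_empty {x : X} (h : f x = ∅) : phi f p x = ⊤ := by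
  rw [phi, scal, h, image_empty, sInf_empty]

lemma neg_le_phi_of_forall_le {x : X} {u : ℝ} (h : ∀ z ∈ f x, p z ≤ u) :
    ((-u : ℝ) : EReal) ≤ phi f p x := by
  refine le_sInf ?_
  rintro _ ⟨z, hz, rfl⟩
  exact EReal.coe_le_coe_iff.2 (neg_le_neg (h z hz))

variable [AddCommGroup X] [Module ℝ X]

lemma ConvexSV.smul_add_smul_mem (hf : ConvexSV f) {x₁ x₂ : X} {z₁ z₂ : Z} {a b : ℝ}
    (ha : 0 < a) (hb : 0 < b) (hab : a + b = 1) (h₁ : z₁ ∈ f x₁) (h₂ : z₂ ∈ f x₂) :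
    a • z₁ + b • z₂ ∈ f (a • x₁ + b • x₂) := by
  obtain rfl : b = 1 - a := by linarith
  exact hf x₁ x₂ a ⟨ha, by linarith⟩
    (subset_closure (add_mem_add (smul_mem_smul_set h₁) (smul_mem_smul_set h₂)))

lemma ConvexSV.phi_smul_add_smul_lt (hf : ConvexSV f) {x₁ x₂ : X} {a b r₁ r₂ : ℝ}
    (ha : 0 < a) (hb : 0 < b) (hab : a + b = 1)
    (h₁ : phi f p x₁ < r₁) (h₂ : phi f p x₂ < r₂) :
    phi f p (a • x₁ + b • x₂) < ((a * r₁ + b * r₂ : ℝ) : EReal) := by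
  obtain ⟨z₁, hz₁, hr₁⟩ := exists_mem_lt_of_phi_lt h₁
  obtain ⟨z₂, hz₂, hr₂⟩ := exists_mem_lt_of_phi_lt h₂
  refine (phi_le_of_mem (hf.smul_add_smul_mem ha hb hab hz₁ hz₂)).trans_lt ?_
  have : -(p (a • z₁ + b • z₂)) < a * r₁ + b * r₂ := by
    simp only [map_add, map_smul, smul_eq_mul]
    nlinarith
  exact EReal.coe_lt_coe_iff.2 this

/-- The three-point form of convexity of `φ` that survives the value `-∞`. -/
lemma ConvexSV.phi_lt_of_mem_openSegment (hf : ConvexSV f) {y₁ y₂ y : X}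
    (hy : y ∈ openSegment ℝ y₁ y₂) {m : EReal} (hm : m ≠ ⊤)
    (h₁ : phi f p y₁ < m) (h₂ : phi f p y₂ ≤ m) : phi f p y < m := by
  obtain ⟨a, b, ha, hb, hab, rfl⟩ := hy
  lift m to ℝ using ⟨hm, (bot_le.trans_lt h₁).ne'⟩
  obtain ⟨r, h₁r, hrm⟩ := EReal.exists_between_coe_real h₁
  have hrm : r < m := EReal.coe_lt_coe_iff.1 hrm
  have h₂' : phi f p y₂ < ((m + a * (m - r) / b : ℝ) : EReal) :=
    h₂.trans_lt (EReal.coe_lt_coe_iff.2 (lt_add_of_pos_right _ (by positivity)))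
  convert hf.phi_smul_add_smul_lt ha hb hab h₁r h₂' using 2
  field_simp
  linear_combination (-m) * hab

lemma ConvexSV.phi_lt_of_mem_openSegment_line (hf : ConvexSV f) (x₀ u : X) {a b s : ℝ}
    (hs : s ∈ openSegment ℝ a b) {m : EReal} (hm : m ≠ ⊤)
    (ha : phi f p (x₀ + a • u) < m) (hb : phi f p (x₀ + b • u) ≤ m) :
    phi f p (x₀ + s • u) < m := by
  refine hf.phi_lt_of_mem_openSegment ?_ hm ha hb
  obtain ⟨α, β, hα, hβ, hαβ, rfl⟩ := hs
  obtain rfl : β = 1 - α := by linarith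
  exact ⟨α, 1 - α, hα, hβ, hαβ, by module⟩

lemma ConvexSV.phi_lt_of_phi_lt_below (hf : ConvexSV f) (x₀ u : X) {τ s t : ℝ}
    (hτs : τ < s) (hst : s < t) (h : phi f p (x₀ + τ • u) < phi f p (x₀ + s • u))
    (htop : phi f p (x₀ + s • u) ≠ ⊤) : phi f p (x₀ + s • u) < phi f p (x₀ + t • u) := by
  by_contra! hts
  have hs : s ∈ openSegment ℝ τ t := by rw [openSegment_eq_Ioo (hτs.trans hst)]; exact ⟨hτs, hst⟩
  exact (hf.phi_lt_of_mem_openSegment_line x₀ u hs htop h hts).false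

lemma ConvexSV.exists_phi_lt_below_of_le (hf : ConvexSV f) (x₀ u : X) {s t : ℝ} (hst : s ≤ t)
    (hs : ∃ τ ∈ Ioo 0 s, phi f p (x₀ + τ • u) < phi f p (x₀ + s • u))
    (htop : phi f p (x₀ + s • u) ≠ ⊤) :
    ∃ τ ∈ Ioo 0 t, phi f p (x₀ + τ • u) < phi f p (x₀ + t • u) := by
  obtain ⟨τ, hτ, hlt⟩ := hs
  rcases hst.eq_or_lt with rfl | hst
  · exact ⟨τ, hτ, hlt⟩
  exact ⟨τ, ⟨hτ.1, hτ.2.trans hst⟩, hlt.trans (hf.phi_lt_of_phi_lt_below x₀ u hτ.2 hst hlt htop)⟩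

end Scalarization

section DiniDerivative

variable {Z X : Type*} [AddCommGroup Z] [Module ℝ Z] [TopologicalSpace Z]
  [AddCommGroup X] [Module ℝ X] {f : X → Set Z} {p : Z →L[ℝ] ℝ}

lemma eresid_le_of_le {r s : EReal} {c : ℝ} (h : r ≤ s + c) : eresid r s ≤ c :=
  sInf_le ⟨c, h, rfl⟩

lemma phiDer_neg_of_le_add {x u : X} {t c : ℝ} (ht : 0 < t) (hc : c < 0)
    (h : phi f p (x + t • u) ≤ phi f p x + c) : phiDer f p x u < 0 := by
  have hres : eresid (phi f p (x + t • u)) (phi f p x) < 0 :=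
    (eresid_le_of_le h).trans_lt (EReal.coe_lt_coe_iff.2 hc)
  refine (iInf₂_le t ht).trans_lt (EReal.mul_neg_iff.2 (Or.inl ⟨?_, hres⟩))
  exact EReal.coe_pos.2 (one_div_pos.2 ht)

lemma exists_phi_lt_of_phiDer_neg {x u : X} (h : phiDer f p x u < 0)
    (hbot : phi f p x ≠ ⊥) (htop : phi f p x ≠ ⊤) :
    ∃ t : ℝ, 0 < t ∧ phi f p (x + t • u) < phi f p x := by
  obtain ⟨t, ht⟩ := iInf_lt_iff.1 h
  obtain ⟨ht, hlt⟩ := iInf_lt_iff.1 ht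
  have hres : eresid (phi f p (x + t • u)) (phi f p x) < 0 := by
    rcases EReal.mul_neg_iff.1 hlt with h | h
    · exact h.2
    · exact absurd h.1 (not_lt.2 (EReal.coe_nonneg.2 (one_div_pos.2 ht).le))
  obtain ⟨_, ⟨c, hc, rfl⟩, hc0⟩ := sInf_lt_iff.1 hres
  refine ⟨t, ht, (show _ ≤ _ from hc).trans_lt ?_⟩
  lift phi f p x to ℝ using ⟨htop, hbot⟩ with s
  exact EReal.coe_lt_coe_iff.2 (by linarith [EReal.coe_lt_coe_iff.1 hc0])

end DiniDerivative

section Separation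

variable {Z : Type*} [AddCommGroup Z] [Module ℝ Z] [TopologicalSpace Z] {C A : Set Z}

lemma IsG.isClosed (h : IsG C A) : IsClosed A := by
  rw [h]
  exact isClosed_closure

lemma IsG.convex [IsTopologicalAddGroup Z] [ContinuousConstSMul ℝ Z] (h : IsG C A) :
    Convex ℝ A := by
  rw [h]
  exact (convex_convexHull ℝ _).closure

lemma IsG.add_subset (h : IsG C A) : A + C ⊆ A := by
  intro w hw
  rw [h]
  exact subset_closure (subset_convexHull ℝ _ hw)

lemma IsG.exists_negDualNZ_separating [IsTopologicalAddGroup Z] [ContinuousSMul ℝ Z]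
    [LocallyConvexSpace ℝ Z] (hCcone : ∀ c ∈ C, ∀ r : ℝ, 0 < r → r • c ∈ C) (h : IsG C A)
    (hA : A.Nonempty) {z : Z} (hz : z ∉ A) :
    ∃ p ∈ negDualNZ C, ∃ u : ℝ, (∀ a ∈ A, p a < u) ∧ u < p z := by
  obtain ⟨p, u, hpA, hpz⟩ := geometric_hahn_banach_closed_point h.convex h.isClosed hz
  obtain ⟨a, ha⟩ := hA
  refine ⟨p, ⟨fun c hc => ?_, ?_⟩, u, hpA, hpz⟩
  · -- otherwise `a + r • c ∈ A` has `p`-value beyond `u` for large `r`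
    by_contra! hpc
    have hr : 0 < (u - p a) / p c := div_pos (by linarith [hpA a ha]) hpc
    have := hpA _ (h.add_subset (add_mem_add ha (hCcone c hc _ hr)))
    rw [map_add, map_smul, smul_eq_mul, div_mul_cancel₀ _ hpc.ne'] at this
    linarith
  · rintro rfl
    have := hpA a ha
    simp only [zero_apply] at this hpz
    linarith

end Separation

open Filter Topology

lemma Set.Finite.exists_forall_of_upward_cover {ι α : Type*} [LinearOrder α] {M : Set ι}
    (hM : M.Finite) {S : Set α} (hS : S.Nonempty) {P : ι → α → Prop}
    (hup : ∀ p ∈ M, ∀ s ∈ S, ∀ t ∈ S, s ≤ t → P p s → P p t)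
    (hcover : ∀ s ∈ S, ∃ p ∈ M, P p s) : ∃ q ∈ M, ∀ s ∈ S, P q s := by
  have : Nonempty α := ⟨hS.some⟩
  by_contra! h
  choose! s hsS hs using h
  obtain ⟨p₀, hp₀, -⟩ := hcover _ hS.some_mem
  obtain ⟨q, hqM, hqmin⟩ := M.exists_min_image s hM ⟨p₀, hp₀⟩
  obtain ⟨p, hpM, hp⟩ := hcover (s q) (hsS q hqM)
  exact hs p hpM (hup p hpM _ (hsS q hqM) _ (hsS p hpM) (hqmin p hpM) hp)

lemma StrictMonoOn.not_forall_eventually_lt {g : ℝ → EReal} {a : ℝ} {v : EReal}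
    (hmono : StrictMonoOn g (Ioo 0 a)) (ha : 0 < a) (hle : ∀ t ∈ Ioo 0 a, g t ≤ v) :
    ¬ ∀ r : ℝ, (r : EReal) < v → ∀ᶠ t in 𝓝[>] 0, (r : EReal) < g t := by
  intro hlsc
  have ha₄ : a / 4 ∈ Ioo 0 a := ⟨by positivity, by linarith⟩
  have ha₂ : a / 2 ∈ Ioo 0 a := ⟨by positivity, by linarith⟩
  obtain ⟨r, hr₄, hr₂⟩ := EReal.exists_between_coe_real (hmono ha₄ ha₂ (by linarith))
  obtain ⟨t, hrt, ht⟩ :=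
    ((hlsc r (hr₂.trans_le (hle _ ha₂))).and (Ioo_mem_nhdsGT ha₄.1)).exists
  exact (hrt.trans ((hmono ⟨ht.1, ht.2.trans ha₄.2⟩ ha₄ ht.2).trans hr₄)).false

section Minty

variable {Z X : Type*} [AddCommGroup Z] [Module ℝ Z] [TopologicalSpace Z]
  [AddCommGroup X] [Module ℝ X] {f : X → Set Z} {p : Z →L[ℝ] ℝ}

def IsMinimalValue (f : X → Set Z) (x₀ : X) : Prop :=
  ∀ x, f x₀ ⊆ f x → f x = f x₀

/-- The scalarized Minty variational inequality `(mvi_M)` at `x₀`. -/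
def SolvesMinty (f : X → Set Z) (M : Set (Z →L[ℝ] ℝ)) (x₀ : X) : Prop :=
  ∀ x, f x ≠ f x₀ → ∃ p ∈ M, phi f p x ≠ ⊥ ∧ phiDer f p x (x₀ - x) < 0

lemma ConvexSV.phiDer_neg_of_separating (hf : ConvexSV f) {x x₀ : X} {z : Z} {u : ℝ}
    (hz : z ∈ f x₀) (hsep : ∀ a ∈ f x, p a < u) (hu : u < p z) (hx : (f x).Nonempty) :
    phiDer f p x (x₀ - x) < 0 := by
  have hδ : 0 < (p z - u) / 4 := div_pos (sub_pos.2 hu) four_pos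
  have hlow : ((-u : ℝ) : EReal) ≤ phi f p x := neg_le_phi_of_forall_le fun a ha => (hsep a ha).le
  lift phi f p x to ℝ using ⟨phi_ne_top_of_nonempty hx, ne_bot_of_le_ne_bot (by simp) hlow⟩
    with c hc
  have hcu : -u ≤ c := EReal.coe_le_coe_iff.1 hlow
  have h₀ : phi f p x₀ < ((-(p z) + (p z - u) / 4 : ℝ) : EReal) :=
    (phi_le_of_mem hz).trans_lt (EReal.coe_lt_coe_iff.2 (by linarith))
  have h₁ : phi f p x < ((c + (p z - u) / 4 : ℝ) : EReal) := by
    rw [← hc]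
    exact EReal.coe_lt_coe_iff.2 (by linarith)
  have hmid := hf.phi_smul_add_smul_lt (a := 1 / 2) (b := 1 / 2) (by norm_num) (by norm_num)
    (by norm_num) h₀ h₁
  rw [show (1 / 2 : ℝ) • x₀ + (1 / 2 : ℝ) • x = x + (1 / 2 : ℝ) • (x₀ - x) by module] at hmid
  refine phiDer_neg_of_le_add (by norm_num) (neg_neg_of_pos hδ) (hmid.le.trans ?_)
  rw [← hc, ← EReal.coe_add]
  exact EReal.coe_le_coe_iff.2 (by linarith)

theorem solvesMinty_negDualNZ_of_isMinimalValue [IsTopologicalAddGroup Z] [ContinuousSMul ℝ Z]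
    [LocallyConvexSpace ℝ Z] {C : Set Z} (hCcone : ∀ c ∈ C, ∀ r : ℝ, 0 < r → r • c ∈ C)
    (hdual : (negDualNZ C).Nonempty) (hG : ∀ x, IsG C (f x)) (hf : ConvexSV f) {x₀ : X}
    (hmin : IsMinimalValue f x₀) : SolvesMinty f (negDualNZ C) x₀ := by
  intro x hne
  rcases (f x).eq_empty_or_nonempty with hx | hx
  · obtain ⟨p, hp⟩ := hdual
    have htop : phi f p x = ⊤ := phi_eq_top_of_eq_empty hx
    refine ⟨p, hp, by simp [htop], phiDer_neg_of_le_add one_pos (by norm_num : (-1 : ℝ) < 0) ?_⟩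
    rw [htop, EReal.top_add_coe]
    exact le_top
  · obtain ⟨z, hz₀, hz⟩ := not_subset.1 (mt (hmin x) hne)
    obtain ⟨p, hp, u, hsep, hu⟩ := (hG x).exists_negDualNZ_separating hCcone hx hz
    have hlow : ((-u : ℝ) : EReal) ≤ phi f p x :=
      neg_le_phi_of_forall_le fun a ha => (hsep a ha).le
    exact ⟨p, hp, ne_bot_of_le_ne_bot (by simp) hlow,
      hf.phiDer_neg_of_separating hz₀ hsep hu hx⟩

lemma ConvexSV.subset_of_mem_Icc (hf : ConvexSV f) {x₀ x : X} (hsub : f x₀ ⊆ f x) {t : ℝ}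
    (ht : t ∈ Icc (0 : ℝ) 1) : f x₀ ⊆ f (x₀ + t • (x - x₀)) := by
  rcases ht.1.eq_or_lt with rfl | ht₀
  · simp
  rcases ht.2.eq_or_lt with rfl | ht₁
  · simpa using hsub
  intro a ha
  convert hf.smul_add_smul_mem ht₀ (sub_pos.2 ht₁) (by ring) (hsub ha) ha using 2 <;> module

lemma SolvesMinty.exists_phi_lt_below {M : Set (Z →L[ℝ] ℝ)} {x₀ x : X}
    (hmvi : SolvesMinty f M x₀) (hf : ConvexSV f) (hx₀ : (f x₀).Nonempty) (hsub : f x₀ ⊆ f x)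
    {t : ℝ} (ht : t ∈ Ioc (0 : ℝ) 1) (hne : f (x₀ + t • (x - x₀)) ≠ f x₀) :
    ∃ p ∈ M, ∃ τ ∈ Ioo 0 t, phi f p (x₀ + τ • (x - x₀)) < phi f p (x₀ + t • (x - x₀)) := by
  obtain ⟨p, hpM, hbot, hder⟩ := hmvi _ hne
  have htop := phi_ne_top_of_nonempty (p := p)
    (hx₀.mono (hf.subset_of_mem_Icc hsub (Ioc_subset_Icc_self ht)))
  obtain ⟨s, hs, hlt⟩ := exists_phi_lt_of_phiDer_neg hder hbot htop
  rw [show x₀ + t • (x - x₀) + s • (x₀ - (x₀ + t • (x - x₀))) = x₀ + ((1 - s) * t) • (x - x₀)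
    by module] at hlt
  have hτ : (1 - s) * t < t := by nlinarith [ht.1]
  -- the decrease may overshoot `x₀`; convexity moves it back into the open segment
  have hmax : max ((1 - s) * t) 0 < t := max_lt hτ ht.1
  refine ⟨p, hpM, (max ((1 - s) * t) 0 + t) / 2,
    ⟨by linarith [le_max_right ((1 - s) * t) 0], by linarith⟩, ?_⟩
  refine hf.phi_lt_of_mem_openSegment_line x₀ (x - x₀) ?_ htop hlt le_rfl
  rw [openSegment_eq_Ioo hτ]
  exact ⟨by linarith [le_max_left ((1 - s) * t) 0], by linarith⟩

theorem isMinimalValue_of_solvesMinty (hf : ConvexSV f) {x₀ : X} (hx₀ : (f x₀).Nonempty)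
    {M : Set (Z →L[ℝ] ℝ)} (hM : M.Finite) (hmvi : SolvesMinty f M x₀)
    (hlsc : ∀ x, ∀ p ∈ M, ∀ r : ℝ, (r : EReal) < phi f p x₀ →
      ∀ᶠ t in 𝓝[>] (0 : ℝ), (r : EReal) < phi f p (x₀ + t • (x - x₀))) :
    IsMinimalValue f x₀ := by
  intro x hsub
  by_contra hne
  have hle : ∀ p, ∀ t ∈ Icc (0 : ℝ) 1, phi f p (x₀ + t • (x - x₀)) ≤ phi f p x₀ :=
    fun p t ht => phi_le_phi_of_subset (hf.subset_of_mem_Icc hsub ht)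
  have htop : ∀ p, ∀ t ∈ Icc (0 : ℝ) 1, phi f p (x₀ + t • (x - x₀)) ≠ ⊤ :=
    fun p t ht => ne_top_of_le_ne_top (phi_ne_top_of_nonempty hx₀) (hle p t ht)
  have hIoo : ∀ {τ : ℝ}, τ ≤ 1 → Ioo 0 τ ⊆ Icc (0 : ℝ) 1 :=
    fun hτ _ hs => ⟨hs.1.le, hs.2.le.trans hτ⟩
  obtain ⟨p₁, -, τ₁, hτ₁, hlt₁⟩ :=
    hmvi.exists_phi_lt_below hf hx₀ hsub ⟨one_pos, le_rfl⟩ (by rwa [one_smul, add_sub_cancel])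
  -- by convexity `φ_{p₁}` stays strictly below `φ_{p₁}(x₀)` on `(0, τ₁)`
  have hbad : ∀ s ∈ Ioo 0 τ₁, f (x₀ + s • (x - x₀)) ≠ f x₀ := by
    intro s hs heq
    have hs' : s ∈ openSegment ℝ τ₁ 0 := by
      rwa [openSegment_symm, openSegment_eq_Ioo hτ₁.1]
    have := hf.phi_lt_of_mem_openSegment_line x₀ (x - x₀) hs' (phi_ne_top_of_nonempty hx₀)
      (hlt₁.trans_le (hle p₁ 1 ⟨zero_le_one, le_rfl⟩)) (by simp)
    simp only [phi, heq] at this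
    exact this.false
  obtain ⟨q, hqM, hq⟩ := hM.exists_forall_of_upward_cover (nonempty_Ioo.2 hτ₁.1)
    (P := fun p s => ∃ τ ∈ Ioo 0 s, phi f p (x₀ + τ • (x - x₀)) < phi f p (x₀ + s • (x - x₀)))
    (fun p _ s hs _ _ hst hP =>
      hf.exists_phi_lt_below_of_le x₀ _ hst hP (htop p s (hIoo hτ₁.2.le hs)))
    (fun s hs => hmvi.exists_phi_lt_below hf hx₀ hsub ⟨hs.1, hs.2.le.trans hτ₁.2.le⟩ (hbad s hs))
  have hmono : StrictMonoOn (fun t => phi f q (x₀ + t • (x - x₀))) (Ioo 0 τ₁) := by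
    intro s hs t _ hst
    obtain ⟨τ, hτ, hlt⟩ := hq s hs
    exact hf.phi_lt_of_phi_lt_below x₀ _ hτ.2 hst hlt (htop q s (hIoo hτ₁.2.le hs))
  exact hmono.not_forall_eventually_lt hτ₁.1 (fun t ht => hle q t (hIoo hτ₁.2.le ht))
    (hlsc x q hqM)

end Minty

theorem stmt_18_general
  {Z : Type*} [AddCommGroup Z] [Module ℝ Z] [TopologicalSpace Z]
  [IsTopologicalAddGroup Z] [ContinuousSMul ℝ Z] [LocallyConvexSpace ℝ Z]
  {X : Type*} [AddCommGroup X] [Module ℝ X]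
  (C : Set Z)
  (hCcone : ∀ c ∈ C, ∀ r : ℝ, 0 < r → r • c ∈ C)
  (hdual : (negDualNZ C).Nonempty)
  (f : X → Set Z) (hG : ∀ x, IsG C (f x)) (hf : ConvexSV f)
  (x₀ : X) (hx₀ : (f x₀).Nonempty) :
    ((∀ x : X, f x₀ ⊆ f x → f x = f x₀) → (∀ x : X, f x ≠ f x₀ →
      ∃ p ∈ negDualNZ C, phi f p x ≠ ⊥ ∧ phiDer f p x (x₀ - x) < 0))
    ∧ (∀ M : Set (Z →L[ℝ] ℝ), M.Finite → M ⊆ negDualNZ C →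
        (∀ x : X, f x ≠ f x₀ →
          ∃ p ∈ M, phi f p x ≠ ⊥ ∧ phiDer f p x (x₀ - x) < 0) →
        (∀ x : X, ∀ p ∈ M, ∀ r : ℝ, (r : EReal) < phi f p x₀ →
          ∃ t₀ ∈ Ioc (0:ℝ) 1, ∀ t ∈ Ico (0:ℝ) t₀,
            (r : EReal) < phi f p (x₀ + t • (x - x₀))) →
        (∀ x : X, f x₀ ⊆ f x → f x = f x₀)) := by
  refine ⟨solvesMinty_negDualNZ_of_isMinimalValue hCcone hdual hG hf,
    fun M hM _ hmvi hlsc => isMinimalValue_of_solvesMinty hf hx₀ hM hmvi ?_⟩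
  intro x p hp r hr
  obtain ⟨t₀, ht₀, hlow⟩ := hlsc x p hp r hr
  exact eventually_of_mem (Ioo_mem_nhdsGT ht₀.1) fun t ht => hlow t (Ioo_subset_Ico_self ht)

theorem stmt_18
  {Z : Type*} [AddCommGroup Z] [Module ℝ Z] [TopologicalSpace Z]
  [IsTopologicalAddGroup Z] [ContinuousSMul ℝ Z] [LocallyConvexSpace ℝ Z] [T2Space Z]
  {X : Type*} [AddCommGroup X] [Module ℝ X]
  (C : Set Z) (hCclosed : IsClosed C) (hCconv : Convex ℝ C)
  (hCcone : ∀ c ∈ C, ∀ r : ℝ, 0 < r → r • c ∈ C) (hC0 : (0:Z) ∈ C)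
  (hdual : (negDualNZ C).Nonempty)
  (f : X → Set Z) (hG : ∀ x, IsG C (f x)) (hf : ConvexSV f)
  (x₀ : X) (hx₀ : (f x₀).Nonempty) :
    ((∀ x : X, f x₀ ⊆ f x → f x = f x₀) → (∀ x : X, f x ≠ f x₀ →
      ∃ p ∈ negDualNZ C, phi f p x ≠ ⊥ ∧ phiDer f p x (x₀ - x) < 0))
    ∧ (∀ M : Set (Z →L[ℝ] ℝ), M.Finite → M ⊆ negDualNZ C →
        (∀ x : X, f x ≠ f x₀ →
          ∃ p ∈ M, phi f p x ≠ ⊥ ∧ phiDer f p x (x₀ - x) < 0) →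
        (∀ x : X, ∀ p ∈ M, ∀ r : ℝ, (r : EReal) < phi f p x₀ →
          ∃ t₀ ∈ Ioc (0:ℝ) 1, ∀ t ∈ Ico (0:ℝ) t₀,
            (r : EReal) < phi f p (x₀ + t • (x - x₀))) →
        (∀ x : X, f x₀ ⊆ f x → f x = f x₀)) :=
  stmt_18_general C hCcone hdual f hG hf x₀ hx₀
end

section
/- Let ψ : S ⊆ X → Z be a C-convex function and let f = ψ^C be its epigraphical extension. Then for all x₀, x ∈ S and all t ∈ (0,1), writing x_t = x₀ + t(x−x₀): (i) (1/t)·(f(x_t) ⊖ f(x₀)) = (1/t)(ψ(x_t) − ψ(x₀)) + C; (ii) the difference quotient is decreasing as t decreases to 0, i.e. for 0 < s ≤ t < 1 one has (1/t)(ψ(x_t) − ψ(x₀)) − (1/s)(ψ(x_s) − ψ(x₀)) ∈ C; (iii) the strong regularity condition holds: for every z* ∈ C⁻∖{0}, inf{−z*(z) : z ∈ f′(x₀, x−x₀)} = φ′_{f,z*}(x₀, x−x₀). -/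
open Set Pointwise

/-!
Along the segment `x_t = x₀ + t (x - x₀)` the residual `f(x_t) ⊖ f(x₀)` is the translate
`{ψ(x_t) - ψ(x₀)} + C`, so each difference quotient set is the cone `C` translated by the vector
quotient `D t`, and `C`-convexity of `ψ` (applied at parameter `s / t` on `[x₀, x_t]`) makes `D`
decrease along `C` as `t ↓ 0`. Hence `f′(x₀, x - x₀)` contains every `D t` and lies in the closed
convex hull of these translates, on which `z* ∈ C⁻` has the same infimum as on the translates
themselves, since superlevel sets of `-z*` are closed half-spaces. Both sides of (iii) are thus
`inf_{0<t<1} -z*(D t)`: on the scalar side, points `x_t ∉ S` contribute `+∞`, and for `t ≥ 1`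
monotonicity bounds `-z*(D t)` below by `-z*(D (1/2))`.
-/

section Cone

variable {Z : Type*} [AddCommGroup Z] {C : Set Z}

theorem add_mem_of_convex_of_smul_mem [Module ℝ Z] (hconv : Convex ℝ C)
    (hcone : ∀ c ∈ C, ∀ r : ℝ, 0 < r → r • c ∈ C) {a b : Z} (ha : a ∈ C) (hb : b ∈ C) :
    a + b ∈ C := by
  convert hcone _ (hconv ha hb (by norm_num : (0:ℝ) ≤ 1 / 2) (by norm_num : (0:ℝ) ≤ 1 / 2)
    (by norm_num)) 2 two_pos using 1
  module

theorem smul_set_eq_of_smul_mem [Module ℝ Z] (hcone : ∀ c ∈ C, ∀ r : ℝ, 0 < r → r • c ∈ C) {r : ℝ}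
    (hr : 0 < r) : r • C = C := by
  refine Subset.antisymm (smul_set_subset_iff.2 fun c hc => hcone c hc r hr) fun c hc => ?_
  refine ⟨r⁻¹ • c, hcone c hc _ (inv_pos.2 hr), ?_⟩
  simp [smul_smul, hr.ne']

theorem mem_singleton_add_iff_sub_mem {a z : Z} : z ∈ {a} + C ↔ z - a ∈ C := by
  simp [singleton_add, sub_eq_neg_add]

theorem resid_singleton_add (h0 : (0:Z) ∈ C) (hadd : ∀ a ∈ C, ∀ b ∈ C, a + b ∈ C) (a b : Z) :
    resid ({a} + C) ({b} + C) = {a - b} + C := by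
  ext z
  simp only [resid, mem_ofPred_eq, mem_singleton_add_iff_sub_mem]
  constructor
  · intro h
    have hbz : b + z ∈ {b} + C + {z} := add_mem_add (mem_singleton_add_iff_sub_mem.2 (by simpa)) rfl
    simpa [sub_sub_eq_add_sub, add_comm] using mem_singleton_add_iff_sub_mem.1 (h hbz)
  · rintro hz _ ⟨w, hw, _, rfl, rfl⟩
    rw [mem_singleton_add_iff_sub_mem] at hw ⊢
    dsimp only
    convert hadd _ hw _ hz using 1
    abel

end Cone

section Scalarization

variable {Z : Type*} [AddCommGroup Z] [Module ℝ Z] [TopologicalSpace Z] (p : Z →L[ℝ] ℝ)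

theorem scal_eq_iInf (A : Set Z) : scal p A = ⨅ z ∈ A, ((-(p z) : ℝ) : EReal) :=
  sInf_image

theorem scal_anti {A B : Set Z} (h : A ⊆ B) : scal p B ≤ scal p A :=
  sInf_le_sInf (image_mono h)

theorem scal_biUnion {ι : Type*} (I : Set ι) (A : ι → Set Z) :
    scal p (⋃ i ∈ I, A i) = ⨅ i ∈ I, scal p (A i) := by
  simp only [scal_eq_iInf, iInf_iUnion]

theorem scal_singleton_add {C : Set Z} (hp : ∀ c ∈ C, p c ≤ 0) (h0 : (0:Z) ∈ C) (a : Z) :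
    scal p ({a} + C) = ((-(p a) : ℝ) : EReal) := by
  refine le_antisymm (sInf_le ⟨a, by simpa [mem_singleton_add_iff_sub_mem], rfl⟩) ?_
  refine le_sInf ?_
  rintro _ ⟨_, ⟨_, rfl, c, hc, rfl⟩, rfl⟩
  exact EReal.coe_le_coe_iff.2 (by simp only [map_add]; linarith [hp c hc])

theorem isClosed_setOf_le_neg (l : EReal) : IsClosed {w : Z | l ≤ ((-(p w) : ℝ) : EReal)} :=
  isClosed_le continuous_const (EReal.continuous_coe_iff.2 p.continuous.neg)

theorem convex_setOf_le_neg (l : EReal) : Convex ℝ {w : Z | l ≤ ((-(p w) : ℝ) : EReal)} := by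
  have hlower : IsLowerSet {r : ℝ | l ≤ ((-r : ℝ) : EReal)} := fun r s hsr hs =>
    hs.trans (EReal.coe_le_coe_iff.2 (neg_le_neg hsr))
  exact hlower.ordConnected.convex.linear_preimage (p : Z →ₗ[ℝ] ℝ)

theorem scal_closure_convexHull (A : Set Z) : scal p (closure (convexHull ℝ A)) = scal p A := by
  refine le_antisymm (scal_anti p (subset_convexHull ℝ A |>.trans subset_closure)) (le_sInf ?_)
  rintro _ ⟨z, hz, rfl⟩
  have hA : A ⊆ {w : Z | scal p A ≤ ((-(p w) : ℝ) : EReal)} := fun w hw =>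
    sInf_le (mem_image_of_mem (fun z => ((-(p z) : ℝ) : EReal)) hw)
  exact closure_minimal (convexHull_min hA (convex_setOf_le_neg p _))
    (isClosed_setOf_le_neg p _) hz

end Scalarization

theorem eresid_coe_coe (a b : ℝ) : eresid (a : EReal) (b : EReal) = ((a - b : ℝ) : EReal) := by
  refine le_antisymm (sInf_le ⟨a - b, ?_, rfl⟩) (le_sInf ?_)
  · simp [← EReal.coe_add]
  · rintro _ ⟨u, hu, rfl⟩
    rw [mem_ofPred_eq, ← EReal.coe_add, EReal.coe_le_coe_iff] at hu
    exact EReal.coe_le_coe_iff.2 (by linarith)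

theorem eresid_top_coe (b : ℝ) : eresid ⊤ (b : EReal) = ⊤ := by
  have hempty : {u : ℝ | (⊤ : EReal) ≤ (b : EReal) + (u : EReal)} = ∅ :=
    eq_empty_of_forall_notMem fun u hu => by
      rw [mem_ofPred_eq, ← EReal.coe_add, top_le_iff] at hu
      exact EReal.coe_ne_top _ hu
  rw [eresid, hempty, image_empty, sInf_empty]

section DifferenceQuotient

variable {X Z : Type*} [AddCommGroup X] [Module ℝ X] [AddCommGroup Z] [Module ℝ Z]

noncomputable def diffQuot (ψ : X → Z) (x₀ u : X) (t : ℝ) : Z := (1 / t) • (ψ (x₀ + t • u) - ψ x₀)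

theorem diffQuot_sub_diffQuot_mem {C : Set Z} {S : Set X} {ψ : X → Z}
    (hψ : ∀ x₁ ∈ S, ∀ x₂ ∈ S, ∀ t ∈ Ioo (0:ℝ) 1,
      (1 - t) • ψ x₁ + t • ψ x₂ ∈ {ψ (x₁ + t • (x₂ - x₁))} + C)
    (hcone : ∀ c ∈ C, ∀ r : ℝ, 0 < r → r • c ∈ C) (h0 : (0:Z) ∈ C)
    {x₀ u : X} (hx₀ : x₀ ∈ S) {s t : ℝ} (hs : 0 < s) (hst : s ≤ t) (ht : x₀ + t • u ∈ S) :
    diffQuot ψ x₀ u t - diffQuot ψ x₀ u s ∈ C := by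
  rcases hst.eq_or_lt with rfl | hlt
  · simpa using h0
  have ht0 : 0 < t := hs.trans hlt
  have hconv := hψ x₀ hx₀ _ ht (s / t) ⟨div_pos hs ht0, (div_lt_one ht0).2 hlt⟩
  have hpt : x₀ + (s / t) • (x₀ + t • u - x₀) = x₀ + s • u := by
    rw [add_sub_cancel_left, smul_smul, div_mul_cancel₀ s ht0.ne']
  rw [hpt, mem_singleton_add_iff_sub_mem] at hconv
  convert hcone _ hconv (1 / s) (one_div_pos.2 hs) using 1
  simp only [diffQuot]
  match_scalars <;> field_simp
  ring

theorem smul_resid_eq_diffQuot {C : Set Z} (h0 : (0:Z) ∈ C) (hadd : ∀ a ∈ C, ∀ b ∈ C, a + b ∈ C)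
    (hcone : ∀ c ∈ C, ∀ r : ℝ, 0 < r → r • c ∈ C) {S : Set X} {ψ : X → Z} {f : X → Set Z}
    (hf : ∀ x ∈ S, f x = {ψ x} + C) {x₀ u : X} (hx₀ : x₀ ∈ S) {t : ℝ} (ht0 : 0 < t)
    (ht : x₀ + t • u ∈ S) :
    (1 / t) • resid (f (x₀ + t • u)) (f x₀) = {diffQuot ψ x₀ u t} + C := by
  rw [hf _ ht, hf _ hx₀, resid_singleton_add h0 hadd, smul_add,
    smul_set_eq_of_smul_mem hcone (one_div_pos.2 ht0), smul_set_singleton, diffQuot]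

end DifferenceQuotient

section Derivative

variable {X Z : Type*} [AddCommGroup X] [Module ℝ X] [AddCommGroup Z] [Module ℝ Z]
  [TopologicalSpace Z] {C : Set Z} (p : Z →L[ℝ] ℝ)

theorem scal_sder_eq_iInf (hp : ∀ c ∈ C, p c ≤ 0) (h0 : (0:Z) ∈ C) {f : X → Set Z} {x₀ u : X}
    {D : ℝ → Z} (hquot : ∀ t ∈ Ioo (0:ℝ) 1, (1 / t) • resid (f (x₀ + t • u)) (f x₀) = {D t} + C)
    (hmono : ∀ s t : ℝ, 0 < s → s ≤ t → t < 1 → D t - D s ∈ C) :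
    scal p (sder f x₀ u) = ⨅ t ∈ Ioo (0:ℝ) 1, ((-(p (D t)) : ℝ) : EReal) := by
  have hmem : ∀ t ∈ Ioo (0:ℝ) 1, D t ∈ sder f x₀ u := by
    intro t ht
    refine mem_iInter₂.2 fun t₀ (ht₀ : 0 < t₀) => subset_closure (subset_convexHull ℝ _ ?_)
    have hs : min t (t₀ / 2) ∈ Ioo (0:ℝ) t₀ :=
      ⟨lt_min ht.1 (half_pos ht₀), (min_le_right _ _).trans_lt (half_lt_self ht₀)⟩
    refine mem_biUnion hs ?_
    rw [hquot _ ⟨hs.1, (min_le_left _ _).trans_lt ht.2⟩, mem_singleton_add_iff_sub_mem]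
    exact hmono _ t hs.1 (min_le_left _ _) ht.2
  refine le_antisymm (le_iInf₂ fun t ht => sInf_le (mem_image_of_mem _ (hmem t ht))) ?_
  calc ⨅ t ∈ Ioo (0:ℝ) 1, ((-(p (D t)) : ℝ) : EReal)
      = scal p (⋃ t ∈ Ioo (0:ℝ) 1, (1 / t) • resid (f (x₀ + t • u)) (f x₀)) := by
        rw [scal_biUnion]
        exact iInf_congr fun t => iInf_congr fun ht => by rw [hquot t ht, scal_singleton_add p hp h0]
    _ = scal p (closure (convexHull ℝ
          (⋃ t ∈ Ioo (0:ℝ) 1, (1 / t) • resid (f (x₀ + t • u)) (f x₀)))) :=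
        (scal_closure_convexHull p _).symm
    _ ≤ scal p (sder f x₀ u) := scal_anti p (iInter₂_subset 1 one_pos)

theorem phiDer_eq_iInf (hp : ∀ c ∈ C, p c ≤ 0) (h0 : (0:Z) ∈ C) {S : Set X} {ψ : X → Z}
    {f : X → Set Z} (hf₁ : ∀ x ∈ S, f x = {ψ x} + C) (hf₂ : ∀ x ∉ S, f x = ∅) {x₀ u : X}
    (hx₀ : x₀ ∈ S) (hseg : ∀ t ∈ Ioo (0:ℝ) 1, x₀ + t • u ∈ S)
    (hmono : ∀ s t : ℝ, 0 < s → s ≤ t → x₀ + t • u ∈ S →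
      diffQuot ψ x₀ u t - diffQuot ψ x₀ u s ∈ C) :
    phiDer f p x₀ u = ⨅ t ∈ Ioo (0:ℝ) 1, ((-(p (diffQuot ψ x₀ u t)) : ℝ) : EReal) := by
  have hphi : ∀ x ∈ S, phi f p x = ((-(p (ψ x)) : ℝ) : EReal) := fun x hx => by
    rw [phi, hf₁ x hx, scal_singleton_add p hp h0]
  have hphi_top : ∀ x ∉ S, phi f p x = ⊤ := fun x hx => by
    rw [phi, hf₂ x hx, scal, image_empty, sInf_empty]
  have hterm : ∀ t : ℝ, x₀ + t • u ∈ S →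
      ((1 / t : ℝ) : EReal) * eresid (phi f p (x₀ + t • u)) (phi f p x₀)
        = ((-(p (diffQuot ψ x₀ u t)) : ℝ) : EReal) := by
    intro t ht
    rw [hphi _ ht, hphi _ hx₀, eresid_coe_coe, ← EReal.coe_mul, diffQuot, map_smul, map_sub,
      smul_eq_mul]
    congr 1
    ring
  refine le_antisymm
    (le_iInf₂ fun t ht => (iInf₂_le t ht.1).trans_eq (hterm t (hseg t ht)))
    (le_iInf₂ fun t (ht : 0 < t) => ?_)
  by_cases htS : x₀ + t • u ∈ S
  · have hs : min t (1 / 2) ∈ Ioo (0:ℝ) 1 :=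
      ⟨lt_min ht one_half_pos, (min_le_right _ _).trans_lt one_half_lt_one⟩
    rw [hterm t htS]
    refine (iInf₂_le _ hs).trans (EReal.coe_le_coe_iff.2 ?_)
    have hpC := hp _ (hmono _ t hs.1 (min_le_left _ _) htS)
    rw [map_sub] at hpC
    linarith
  · rw [hphi_top _ htS, hphi _ hx₀, eresid_top_coe,
      EReal.mul_top_of_pos (EReal.coe_pos.2 (one_div_pos.2 ht))]
    exact le_top

end Derivative

theorem stmt_19_general
  {Z : Type*} [AddCommGroup Z] [Module ℝ Z] [TopologicalSpace Z]
  {X : Type*} [AddCommGroup X] [Module ℝ X]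
  (C : Set Z) (hCconv : Convex ℝ C)
  (hCcone : ∀ c ∈ C, ∀ r : ℝ, 0 < r → r • c ∈ C) (hC0 : (0:Z) ∈ C)
  (S : Set X) (hS : Convex ℝ S) (ψ : X → Z)
  (hψ : ∀ x₁ ∈ S, ∀ x₂ ∈ S, ∀ t ∈ Ioo (0:ℝ) 1,
    (1 - t) • ψ x₁ + t • ψ x₂ ∈ {ψ (x₁ + t • (x₂ - x₁))} + C)
  (f : X → Set Z) (hf₁ : ∀ x ∈ S, f x = {ψ x} + C) (hf₂ : ∀ x ∉ S, f x = (∅ : Set Z))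
  (x₀ : X) (hx₀ : x₀ ∈ S) (x : X) (hx : x ∈ S) :
    (∀ t ∈ Ioo (0:ℝ) 1,
      (1 / t) • resid (f (x₀ + t • (x - x₀))) (f x₀)
        = {(1 / t) • (ψ (x₀ + t • (x - x₀)) - ψ x₀)} + C)
    ∧ (∀ s t : ℝ, 0 < s → s ≤ t → t < 1 →
        (1 / t) • (ψ (x₀ + t • (x - x₀)) - ψ x₀)
          - (1 / s) • (ψ (x₀ + s • (x - x₀)) - ψ x₀) ∈ C)
    ∧ (∀ p ∈ negDualNZ C, scal p (sder f x₀ (x - x₀)) = phiDer f p x₀ (x - x₀)) := by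
  have hadd : ∀ a ∈ C, ∀ b ∈ C, a + b ∈ C := fun _ ha _ hb =>
    add_mem_of_convex_of_smul_mem hCconv hCcone ha hb
  have hseg : ∀ t ∈ Ioo (0:ℝ) 1, x₀ + t • (x - x₀) ∈ S := fun t ht =>
    hS.add_smul_sub_mem hx₀ hx ⟨ht.1.le, ht.2.le⟩
  have hmono : ∀ s t : ℝ, 0 < s → s ≤ t → x₀ + t • (x - x₀) ∈ S →
      diffQuot ψ x₀ (x - x₀) t - diffQuot ψ x₀ (x - x₀) s ∈ C := fun _ _ hs hst ht =>
    diffQuot_sub_diffQuot_mem hψ hCcone hC0 hx₀ hs hst ht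
  have hmono' : ∀ s t : ℝ, 0 < s → s ≤ t → t < 1 →
      diffQuot ψ x₀ (x - x₀) t - diffQuot ψ x₀ (x - x₀) s ∈ C := fun s t hs hst ht =>
    hmono s t hs hst (hseg t ⟨hs.trans_le hst, ht⟩)
  have hquot : ∀ t ∈ Ioo (0:ℝ) 1, (1 / t) • resid (f (x₀ + t • (x - x₀))) (f x₀)
      = {diffQuot ψ x₀ (x - x₀) t} + C := fun t ht =>
    smul_resid_eq_diffQuot hC0 hadd hCcone hf₁ hx₀ ht.1 (hseg t ht)
  refine ⟨hquot, hmono', fun p hp => ?_⟩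
  rw [scal_sder_eq_iInf p hp.1 hC0 hquot hmono', phiDer_eq_iInf p hp.1 hC0 hf₁ hf₂ hx₀ hseg hmono]

theorem stmt_19
  {Z : Type*} [AddCommGroup Z] [Module ℝ Z] [TopologicalSpace Z]
  [IsTopologicalAddGroup Z] [ContinuousSMul ℝ Z] [LocallyConvexSpace ℝ Z] [T2Space Z]
  {X : Type*} [AddCommGroup X] [Module ℝ X]
  (C : Set Z) (hCclosed : IsClosed C) (hCconv : Convex ℝ C)
  (hCcone : ∀ c ∈ C, ∀ r : ℝ, 0 < r → r • c ∈ C) (hC0 : (0:Z) ∈ C)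
  (hdual : (negDualNZ C).Nonempty)
  (S : Set X) (hS : Convex ℝ S) (ψ : X → Z)
  (hψ : ∀ x₁ ∈ S, ∀ x₂ ∈ S, ∀ t ∈ Ioo (0:ℝ) 1,
    (1 - t) • ψ x₁ + t • ψ x₂ ∈ {ψ (x₁ + t • (x₂ - x₁))} + C)
  (f : X → Set Z) (hf₁ : ∀ x ∈ S, f x = {ψ x} + C) (hf₂ : ∀ x ∉ S, f x = (∅ : Set Z))
  (x₀ : X) (hx₀ : x₀ ∈ S) (x : X) (hx : x ∈ S) :
    (∀ t ∈ Ioo (0:ℝ) 1,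
      (1 / t) • resid (f (x₀ + t • (x - x₀))) (f x₀)
        = {(1 / t) • (ψ (x₀ + t • (x - x₀)) - ψ x₀)} + C)
    ∧ (∀ s t : ℝ, 0 < s → s ≤ t → t < 1 →
        (1 / t) • (ψ (x₀ + t • (x - x₀)) - ψ x₀)
          - (1 / s) • (ψ (x₀ + s • (x - x₀)) - ψ x₀) ∈ C)
    ∧ (∀ p ∈ negDualNZ C, scal p (sder f x₀ (x - x₀)) = phiDer f p x₀ (x - x₀)) :=
  stmt_19_general C hCconv hCcone hC0 S hS ψ hψ f hf₁ hf₂ x₀ hx₀ x hx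
end
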